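/- arXiv:1501.04620 — 8 statements merged into one kernel-verified Lean document; each statement's English description precedes it below -/
import Mathlib

section
/- A loop (Q,·) with self-map σ is a σ-generalized (right) Bol loop if and only if for every x in Q the triple (R_x^{-1}, L_x R_{σ(x)}, R_{σ(x)}) is an autotopism of (Q,·). -/
/-- A loop: a magma with two-sided identity whose translations are bijections. -/
structure IsLoop (Q : Type*) [Mul Q] [One Q] : Prop where
  one_mul : ∀ x : Q, 1 * x = x
  mul_one : ∀ x : Q, x * 1 = x
  lbij : ∀ x : Q, Function.Bijective (fun y : Q => x * y)
  rbij : ∀ x : Q, Function.Bijective (fun y : Q => y * x)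

/-- Left translation `L x : y ↦ x * y` as a permutation. -/
noncomputable def Lt {Q : Type*} [Mul Q] [One Q] (h : IsLoop Q) (x : Q) : Equiv.Perm Q :=
  Equiv.ofBijective _ (h.lbij x)

/-- Right translation `R x : y ↦ y * x` as a permutation. -/
noncomputable def Rt {Q : Type*} [Mul Q] [One Q] (h : IsLoop Q) (x : Q) : Equiv.Perm Q :=
  Equiv.ofBijective _ (h.rbij x)

/-- The right inverse `x^ρ`, the unique solution of `x * x^ρ = 1`. -/
noncomputable def rinv {Q : Type*} [Mul Q] [One Q] (h : IsLoop Q) (x : Q) : Q :=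
  (Lt h x).symm 1

/-- The left inverse `x^λ`, the unique solution of `x^λ * x = 1`. -/
noncomputable def linv {Q : Type*} [Mul Q] [One Q] (h : IsLoop Q) (x : Q) : Q :=
  (Rt h x).symm 1

/-- σ-generalized (right) Bol identity. -/
def RightBol {Q : Type*} [Mul Q] (σ : Q → Q) : Prop :=
  ∀ x y z : Q, ((x * y) * z) * σ y = x * ((y * z) * σ y)

/-- σ-generalized left Bol identity. -/
def LeftBol {Q : Type*} [Mul Q] (σ : Q → Q) : Prop :=
  ∀ x y z : Q, σ y * (z * (y * x)) = (σ y * (z * y)) * x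

/-- `(A,B,C)` is an autotopism: `A x * B y = C (x * y)`. -/
def Autotopism {Q : Type*} [Mul Q] (A B C : Equiv.Perm Q) : Prop :=
  ∀ x y : Q, A x * B y = C (x * y)

/-- Substitute `u * x` for the first argument, which `R_x` being onto allows. -/
theorem autotopism_iff_rightBol_at {Q : Type*} [Mul Q] [One Q] (h : IsLoop Q) (σ : Q → Q)
    (x : Q) :
    Autotopism ((Rt h x).symm) ((Lt h x).trans (Rt h (σ x))) (Rt h (σ x)) ↔
      ∀ u z : Q, ((u * x) * z) * σ x = u * ((x * z) * σ x) := by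
  refine (Rt h x).symm.forall_congr_left.trans (forall_congr' fun u => forall_congr' fun z => ?_)
  rw [Equiv.symm_symm, Equiv.symm_apply_apply, eq_comm]
  rfl

/-- A loop is a σ-generalized right Bol loop iff
`(R_x⁻¹, L_x R_{σ x}, R_{σ x})` is an autotopism for every `x`. -/
theorem stmt0 {Q : Type*} [Mul Q] [One Q] (h : IsLoop Q) (σ : Q → Q) :
    RightBol σ ↔
      ∀ x : Q, Autotopism ((Rt h x).symm) ((Lt h x).trans (Rt h (σ x))) (Rt h (σ x)) := by
  simp only [autotopism_iff_rightBol_at]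
  exact forall_comm
end

section
/- Every σ-generalized (right) Bol loop satisfies the right inverse property: (y·x)·x^ρ = y for all x,y, where x^ρ is the right inverse of x. -/
namespace IsLoop

variable {Q : Type*} [Mul Q] [One Q]

theorem mul_rinv (h : IsLoop Q) (x : Q) : x * rinv h x = 1 :=
  (Lt h x).apply_symm_apply 1

theorem mul_right_cancel (h : IsLoop Q) {a b c : Q} (hac : a * c = b * c) : a = b :=
  (h.rbij c).injective hac

end IsLoop

/-- Every σ-generalized right Bol loop has the right inverse property. -/
theorem stmt1 {Q : Type*} [Mul Q] [One Q] (h : IsLoop Q) (σ : Q → Q)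
    (hB : RightBol σ) : ∀ x y : Q, (y * x) * rinv h x = y := by
  intro x y
  have hbol : ((y * x) * rinv h x) * σ x = y * σ x := by
    rw [hB y x (rinv h x), h.mul_rinv, h.one_mul]
  exact h.mul_right_cancel hbol
end

section
/- Every σ-generalized left Bol loop (half Bol loop) satisfies the left inverse property: x^λ·(x·y) = y for all x,y. -/
theorem IsLoop.linv_mul_self {Q : Type*} [Mul Q] [One Q] (h : IsLoop Q) (x : Q) :
    linv h x * x = 1 :=
  (Rt h x).apply_symm_apply 1

/-- Every σ-generalized left Bol loop has the left inverse property. -/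
theorem stmt6 {Q : Type*} [Mul Q] [One Q] (h : IsLoop Q) (σ : Q → Q)
    (hB : LeftBol σ) : ∀ x y : Q, linv h x * (x * y) = y := by
  intro x y
  apply (h.lbij (σ x)).injective
  calc σ x * (linv h x * (x * y)) = σ x * (linv h x * x) * y := hB y x (linv h x)
    _ = σ x * y := by rw [h.linv_mul_self, h.mul_one]
end

section
/- Let (Q,·) be a loop, A(Q) a group of automorphisms of Q and (H,∘) the A-holomorph with (α,x)∘(β,y) = (αβ, (xβ)·y). Then (H,∘) has the right inverse property if and only if (Q,·) does. -/
/-- Multiplication on the A-holomorph `H = A(Q) × Q`: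
`(α,x) ∘ (β,y) = (αβ, xβ · y)`, with maps acting on the right
(so composition `αβ` is `β * α` as left-action permutations). -/
def hmul {Q : Type*} [Mul Q] (A : Subgroup (Equiv.Perm Q)) (p q : A × Q) : A × Q :=
  (q.1 * p.1, (q.1 : Equiv.Perm Q) p.2 * q.2)

section Holomorph

variable {Q : Type*} [Mul Q] (A : Subgroup (Equiv.Perm Q))

theorem hmul_mk_one_mk_one (x y : Q) : hmul A (1, x) (1, y) = (1, x * y) := by
  simp [hmul]

theorem hmul_eq_one_iff [One Q] {p p' : A × Q} :
    hmul A p p' = (1, 1) ↔ p'.1 * p.1 = 1 ∧ (p'.1 : Equiv.Perm Q) p.2 * p'.2 = 1 := by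
  simp [hmul, Prod.ext_iff]

theorem hmul_hmul_of_hmul_eq_one [One Q] {p p' : A × Q} (r : A × Q) (hpp' : hmul A p p' = (1, 1))
    (hmul_map : ∀ x y : Q, p'.1.1 (x * y) = p'.1.1 x * p'.1.1 y) :
    hmul A (hmul A r p) p' = (r.1, (r.2 * (p'.1 : Equiv.Perm Q) p.2) * p'.2) := by
  obtain ⟨hfst, -⟩ := (hmul_eq_one_iff A).mp hpp'
  have hcancel : ∀ z : Q, (p'.1 : Equiv.Perm Q) ((p.1 : Equiv.Perm Q) z) = z := fun z => by
    simpa using congrArg (fun α : A => (α : Equiv.Perm Q) z) hfst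
  simp [hmul, ← mul_assoc, hfst, hmul_map, hcancel]

end Holomorph

theorem stmt10_general {Q : Type*} [Mul Q] [One Q]
    (A : Subgroup (Equiv.Perm Q))
    (hA : ∀ α ∈ A, ∀ x y : Q, (α : Equiv.Perm Q) (x * y) = α x * α y) :
    (∀ p p' r : A × Q, hmul A p p' = (1, (1 : Q)) → hmul A (hmul A r p) p' = r) ↔
      (∀ x x' y : Q, x * x' = 1 → (y * x) * x' = y) := by
  constructor
  · intro hH x x' y hxx'
    have h := hH (1, x) (1, x') (1, y) (by rw [hmul_mk_one_mk_one, hxx'])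
    rw [hmul_mk_one_mk_one, hmul_mk_one_mk_one] at h
    exact congrArg Prod.snd h
  · intro hQ p p' r hpp'
    rw [hmul_hmul_of_hmul_eq_one A r hpp' (hA _ p'.1.2),
      hQ _ _ _ ((hmul_eq_one_iff A).mp hpp').2]

/-- The A-holomorph has the right inverse property iff the loop does. -/
theorem stmt10 {Q : Type*} [Mul Q] [One Q] (h : IsLoop Q)
    (A : Subgroup (Equiv.Perm Q))
    (hA : ∀ α ∈ A, ∀ x y : Q, (α : Equiv.Perm Q) (x * y) = α x * α y) :
    (∀ p p' r : A × Q, hmul A p p' = (1, (1 : Q)) → hmul A (hmul A r p) p' = r) ↔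
      (∀ x x' y : Q, x * x' = 1 → (y * x) * x' = y) :=
  stmt10_general A hA
end

section
/- In a loop with the right inverse property, if (U,V,W) is an autotopism then (W, J V J, U) is also an autotopism, where J : x ↦ x^{-1}. -/
/-- In a right inverse property loop, if `(U,V,W)` is an autotopism then so is
`(W, J V J, U)`, where `J : x ↦ x⁻¹`. -/
theorem stmt11 {Q : Type*} [Mul Q] [One Q] (h : IsLoop Q)
    (hRIP : ∀ x y : Q, (y * x) * rinv h x = y)
    (U V W : Equiv.Perm Q) (hUVW : Autotopism U V W) :
    ∀ a b : Q, W a * rinv h (V (rinv h b)) = U (a * b) := by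
  intro a b
  calc W a * rinv h (V (rinv h b))
      = W ((a * b) * rinv h b) * rinv h (V (rinv h b)) := by rw [hRIP]
    _ = (U (a * b) * V (rinv h b)) * rinv h (V (rinv h b)) := by rw [hUVW]
    _ = U (a * b) := hRIP _ _
end

section
/- Let (Q,·) be a loop with self-map σ, A(Q) a group of automorphisms, (H,∘) the A-holomorph, and σ' : H → H given by σ'(α,x) = (α, σ(x)). Then (H,∘) is a σ'-generalized Bol loop if and only if for all x ∈ Q and all α,γ ∈ A(Q), the triple (R_x^{-1}, L_x R_{σ(xγ^{-1})α^{-1}}, R_{σ(xγ^{-1})α^{-1}}) is an autotopism of (Q,·). -/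
section BolIdentity

variable {Q : Type*} [Mul Q]

def BolIdentityAt (x c : Q) : Prop :=
  ∀ u w : Q, ((u * x) * w) * c = u * ((x * w) * c)

theorem bolIdentityAt_map_iff {P : Type*} [Mul P] (f : Q ≃* P) (x c : Q) :
    BolIdentityAt (f x) (f c) ↔ BolIdentityAt x c := by
  unfold BolIdentityAt
  simp only [f.surjective.forall₂, ← map_mul, f.injective.eq_iff]

theorem autotopism_iff_bolIdentityAt [One Q] (h : IsLoop Q) (x c : Q) :
    Autotopism (Rt h x).symm ((Lt h x).trans (Rt h c)) (Rt h c) ↔ BolIdentityAt x c := by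
  unfold Autotopism BolIdentityAt
  rw [(Rt h x).surjective.forall]
  simp only [Equiv.symm_apply_apply]
  exact forall₂_congr fun _ _ => eq_comm

section Holomorph

variable {A : Subgroup (Equiv.Perm Q)}
  (hA : ∀ α ∈ A, ∀ x y : Q, (α : Equiv.Perm Q) (x * y) = α x * α y)

include hA in
theorem holomorph_rightBol_iff (σ : Q → Q) :
    (∀ p q r : A × Q,
        hmul A (hmul A (hmul A p q) r) (q.1, σ q.2) =
          hmul A p (hmul A (hmul A q r) (q.1, σ q.2))) ↔
      ∀ (δ : A) (y : Q), BolIdentityAt ((δ : Equiv.Perm Q) y) (σ y) := by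
  constructor
  · intro H δ y u w
    have := congrArg Prod.snd (H (1, (δ : Equiv.Perm Q)⁻¹ u) (1, y) (δ, w))
    simpa [hmul, hA _ δ.2] using this
  · rintro H ⟨p₁, p₂⟩ ⟨q₁, q₂⟩ ⟨r₁, r₂⟩
    refine Prod.ext (by simp [hmul, mul_assoc]) ?_
    have := H (q₁ * r₁) q₂ (((q₁ * r₁ * q₁ : A) : Equiv.Perm Q) p₂) ((q₁ : Equiv.Perm Q) r₂)
    simpa [hmul, hA _ q₁.2, hA _ r₁.2, Equiv.Perm.mul_apply] using this

include hA in
theorem forall_bolIdentityAt_iff (σ : Q → Q) :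
    (∀ (δ : A) (y : Q), BolIdentityAt ((δ : Equiv.Perm Q) y) (σ y)) ↔
      ∀ (x : Q) (α γ : A),
        BolIdentityAt x ((α : Equiv.Perm Q)⁻¹ (σ ((γ : Equiv.Perm Q)⁻¹ x))) := by
  constructor
  · intro H x α γ
    rw [← bolIdentityAt_map_iff (MulEquiv.mk (α : Equiv.Perm Q) (hA α α.2))]
    simpa [Equiv.Perm.mul_apply] using H (α * γ) ((γ : Equiv.Perm Q)⁻¹ x)
  · intro H δ y
    simpa using H ((δ : Equiv.Perm Q) y) 1 δ

end Holomorph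

end BolIdentity

/-- The A-holomorph `(H,∘)` with `σ'(α,x) = (α, σ(x))` is a σ'-generalized Bol
loop iff `(R_x⁻¹, L_x R_{σ(xγ⁻¹)α⁻¹}, R_{σ(xγ⁻¹)α⁻¹})` is an autotopism of `Q`
for all `x ∈ Q` and all `α, γ ∈ A(Q)`. -/
theorem stmt12 {Q : Type*} [Mul Q] [One Q] (h : IsLoop Q)
    (A : Subgroup (Equiv.Perm Q))
    (hA : ∀ α ∈ A, ∀ x y : Q, (α : Equiv.Perm Q) (x * y) = α x * α y)
    (σ : Q → Q) :
    (∀ p q r : A × Q,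
        hmul A (hmul A (hmul A p q) r) (q.1, σ q.2) =
          hmul A p (hmul A (hmul A q r) (q.1, σ q.2))) ↔
      ∀ (x : Q) (α γ : A) (a b : Q),
        (Rt h x).symm a * ((x * b) * ((α : Equiv.Perm Q)⁻¹ (σ ((γ : Equiv.Perm Q)⁻¹ x)))) =
          (a * b) * ((α : Equiv.Perm Q)⁻¹ (σ ((γ : Equiv.Perm Q)⁻¹ x))) := by
  rw [holomorph_rightBol_iff hA, forall_bolIdentityAt_iff hA]
  simp only [← autotopism_iff_bolIdentityAt h]
  exact Iff.rfl
end

section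
/- With notation as above, the A-holomorph (H,∘) with σ'(α,x) = (α,σ(x)) is a σ'-generalized Bol loop if and only if (Q,·) is an (α^{-1}σγ^{-1})-generalized Bol loop for all α,γ ∈ A(Q), where α^{-1}σγ^{-1} denotes the self-map x ↦ ((σ(xγ^{-1}))α^{-1}. -/
/-! The first components of the two sides of the σ'-Bol identity in `H` always agree. Since
`A(Q)` acts by automorphisms, the second components at `(α, x), (β, y), (γ, z)` form the
`σ (β * γ)⁻¹`-Bol identity of `Q` at the points `(β * γ * β) x, (β * γ) y, β z`, which range over
all of `Q`. So `H` is σ'-Bol iff `Q` is `σ γ⁻¹`-Bol for every `γ ∈ A(Q)`, and conjugating by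
`α ∈ A(Q)` turns `σ (α * γ)⁻¹` into `α⁻¹ σ γ⁻¹`. -/

theorem RightBol.comp_mulEquiv {Q : Type*} [Mul Q] {τ : Q → Q} (hτ : RightBol τ)
    (φ : Q ≃* Q) : RightBol (φ.symm ∘ τ ∘ φ) := by
  intro x y z
  apply φ.injective
  simpa only [map_mul, Function.comp_apply, MulEquiv.apply_symm_apply] using
    hτ (φ x) (φ y) (φ z)

section Holomorph

variable {Q : Type*} [Mul Q] {A : Subgroup (Equiv.Perm Q)}

theorem hmul_bol_iff (hA : ∀ α ∈ A, ∀ x y : Q, (α : Equiv.Perm Q) (x * y) = α x * α y)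
    (σ : Q → Q) (p q r : A × Q) :
    hmul A (hmul A (hmul A p q) r) (q.1, σ q.2) = hmul A p (hmul A (hmul A q r) (q.1, σ q.2)) ↔
      let u := (q.1 * r.1 * q.1 : Equiv.Perm Q) p.2
      let v := (q.1 * r.1 : Equiv.Perm Q) q.2
      let w := (q.1 : Equiv.Perm Q) r.2
      ((u * v) * w) * σ q.2 = u * ((v * w) * σ q.2) := by
  simp only [hmul, Prod.mk.injEq, mul_assoc, true_and, Subgroup.coe_mul, Equiv.Perm.mul_apply,
    hA q.1 q.1.2, hA r.1 r.1.2]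

theorem holomorph_bol_iff (hA : ∀ α ∈ A, ∀ x y : Q, (α : Equiv.Perm Q) (x * y) = α x * α y)
    (σ : Q → Q) :
    (∀ p q r : A × Q,
        hmul A (hmul A (hmul A p q) r) (q.1, σ q.2) =
          hmul A p (hmul A (hmul A q r) (q.1, σ q.2))) ↔
      ∀ γ : A, RightBol (fun x : Q => σ ((γ : Equiv.Perm Q)⁻¹ x)) := by
  simp only [hmul_bol_iff hA]
  constructor
  · intro hH γ x y z
    simpa using hH (1, (γ : Equiv.Perm Q)⁻¹ x) (1, (γ : Equiv.Perm Q)⁻¹ y) (γ, z)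
  · rintro hB ⟨a, x⟩ ⟨b, y⟩ ⟨c, z⟩
    simpa using
      hB (b * c) ((b * c * b : Equiv.Perm Q) x) ((b * c : Equiv.Perm Q) y) ((b : Equiv.Perm Q) z)

end Holomorph

theorem stmt13_general {Q : Type*} [Mul Q]
    (A : Subgroup (Equiv.Perm Q))
    (hA : ∀ α ∈ A, ∀ x y : Q, (α : Equiv.Perm Q) (x * y) = α x * α y)
    (σ : Q → Q) :
    (∀ p q r : A × Q,
        hmul A (hmul A (hmul A p q) r) (q.1, σ q.2) =
          hmul A p (hmul A (hmul A q r) (q.1, σ q.2))) ↔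
      ∀ α γ : A,
        RightBol (fun x : Q => (α : Equiv.Perm Q)⁻¹ (σ ((γ : Equiv.Perm Q)⁻¹ x))) := by
  rw [holomorph_bol_iff hA]
  constructor
  · intro hB α γ
    have hconj := (hB (α * γ)).comp_mulEquiv ⟨α, hA α α.2⟩
    simpa [Function.comp_def] using hconj
  · intro hB γ
    simpa using hB 1 γ

/-- The A-holomorph with `σ'(α,x) = (α, σ(x))` is a σ'-generalized Bol loop iff
`Q` is an `(α⁻¹ σ γ⁻¹)`-generalized Bol loop for all `α, γ ∈ A(Q)`. -/
theorem stmt13 {Q : Type*} [Mul Q] [One Q] (h : IsLoop Q)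
    (A : Subgroup (Equiv.Perm Q))
    (hA : ∀ α ∈ A, ∀ x y : Q, (α : Equiv.Perm Q) (x * y) = α x * α y)
    (σ : Q → Q) :
    (∀ p q r : A × Q,
        hmul A (hmul A (hmul A p q) r) (q.1, σ q.2) =
          hmul A p (hmul A (hmul A q r) (q.1, σ q.2))) ↔
      ∀ α γ : A,
        RightBol (fun x : Q => (α : Equiv.Perm Q)⁻¹ (σ ((γ : Equiv.Perm Q)⁻¹ x))) :=
  stmt13_general A hA σ
end

section
/- Let (Q,·) be a σ-generalized Bol loop and let α ∈ BS(Q,·) (the Bryant–Schneider group) with α = ψ R_x for some x ∈ Q and bijection ψ fixing the identity e. Then ψ is a pseudo-automorphism of (Q,·) with companion (x·g^{-1})·σ(x) for some g ∈ Q; moreover ψ and x are uniquely determined by α. -/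
/-! Composing the Bryant–Schneider autotopism of `α` with the inverse of the Bol autotopism at `g`
and then with the Bol autotopism at `x` yields an autotopism whose first component is
`ψ = R_x⁻¹ α`. An autotopism whose first component fixes `1` is of the form `(ψ, R_c ψ, R_c ψ)`
with `c` the image of `1` under its last component, and here `c = (x / σ g) · σ x`. -/

def IsPseudoAutomorphism {Q : Type*} [Mul Q] [One Q] (h : IsLoop Q) (ψ : Equiv.Perm Q) (c : Q) :
    Prop :=
  Autotopism ψ (Rt h c * ψ) (Rt h c * ψ)

section Autotopism
variable {Q : Type*} [Mul Q] {A B C A' B' C' : Equiv.Perm Q}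

theorem Autotopism.mul (h' : Autotopism A' B' C') (h : Autotopism A B C) :
    Autotopism (A' * A) (B' * B) (C' * C) := fun x y => by
  rw [Equiv.Perm.mul_apply, Equiv.Perm.mul_apply, Equiv.Perm.mul_apply, h', h]

theorem Autotopism.inv (h : Autotopism A B C) : Autotopism A⁻¹ B⁻¹ C⁻¹ := fun x y => by
  rw [Equiv.Perm.eq_inv_iff_eq, ← h]
  simp only [Equiv.Perm.inv_def, Equiv.apply_symm_apply]

end Autotopism

namespace IsLoop
variable {Q : Type*} [Mul Q] [One Q] (h : IsLoop Q)

@[simp]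
theorem Lt_apply (x y : Q) : Lt h x y = x * y := rfl

@[simp]
theorem Rt_apply (x y : Q) : Rt h x y = y * x := rfl

theorem rinv_linv (t : Q) : rinv h (linv h t) = t :=
  (Lt h _).symm_apply_eq.mpr ((Rt h t).apply_symm_apply 1).symm

theorem autotopism_rightBol {σ : Q → Q} (hB : RightBol σ) (y : Q) :
    Autotopism (Rt h y)⁻¹ (Rt h (σ y) * Lt h y) (Rt h (σ y)) := fun w z => by
  have hw : (Rt h y)⁻¹ w * y = w := (Rt h y).apply_symm_apply w
  rw [Equiv.Perm.mul_apply, Lt_apply, Rt_apply, Rt_apply, ← hB, hw]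

theorem autotopism_of_bryantSchneider {σ : Q → Q} (hB : RightBol σ) {α : Equiv.Perm Q} {f g : Q}
    (hα : Autotopism ((Rt h g)⁻¹ * α) ((Lt h f)⁻¹ * α) α) (x : Q) :
    Autotopism ((Rt h x)⁻¹ * α)
      (Rt h (σ x) * Lt h x * (Lt h g)⁻¹ * (Rt h (σ g))⁻¹ * (Lt h f)⁻¹ * α)
      (Rt h (σ x) * (Rt h (σ g))⁻¹ * α) := by
  have hcomp := (h.autotopism_rightBol hB x).mul ((h.autotopism_rightBol hB g).inv.mul hα)
  simpa only [mul_inv_rev, inv_inv, mul_assoc, mul_inv_cancel_left] using hcomp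

end IsLoop

theorem Autotopism.isPseudoAutomorphism {Q : Type*} [Mul Q] [One Q] (h : IsLoop Q)
    {ψ B C : Equiv.Perm Q} (hA : Autotopism ψ B C) (hψ : ψ 1 = 1) :
    IsPseudoAutomorphism h ψ (C 1) := by
  have hBC : ∀ b, B b = C b := fun b => by simpa only [hψ, h.one_mul] using hA 1 b
  have hC : ∀ a, C a = ψ a * C 1 := fun a => by simpa only [h.mul_one, hBC] using (hA a 1).symm
  intro a b
  change ψ a * (ψ b * C 1) = ψ (a * b) * C 1
  rw [← hC, ← hC, ← hBC, hA]

theorem IsLoop.eq_of_mul_eq_mul {Q : Type*} [Mul Q] [One Q] (h : IsLoop Q) {ψ ψ' : Equiv.Perm Q}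
    {x x' : Q} (hψ : ψ 1 = 1) (hψ' : ψ' 1 = 1)
    (hmul : ∀ y, ψ' y * x' = ψ y * x) : ψ' = ψ ∧ x' = x := by
  have hx : x' = x := by simpa only [hψ, hψ', h.one_mul] using hmul 1
  subst hx
  exact ⟨Equiv.ext fun y => (h.rbij x').injective (hmul y), rfl⟩

/-- In a σ-generalized Bol loop, if `α ∈ BS(Q,·)` factors as `α = ψ R_x` with
`ψ` fixing the identity, then `ψ` is a pseudo-automorphism with companion
`(x·g⁻¹)·σ(x)` for some `g`, and `ψ`, `x` are uniquely determined by `α`. -/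
theorem stmt15 {Q : Type*} [Mul Q] [One Q] (h : IsLoop Q) (σ : Q → Q)
    (hB : RightBol σ) (α : Equiv.Perm Q)
    (hBS : ∃ f g : Q, ∀ a b : Q,
      (Rt h g).symm (α a) * (Lt h f).symm (α b) = α (a * b))
    (ψ : Equiv.Perm Q) (x : Q) (hψ : ψ 1 = 1)
    (hdec : ∀ y : Q, α y = ψ y * x) :
    (∃ g : Q, ∀ a b : Q,
        ψ a * (ψ b * ((x * rinv h g) * σ x)) = ψ (a * b) * ((x * rinv h g) * σ x)) ∧
      (∀ (ψ' : Equiv.Perm Q) (x' : Q), ψ' 1 = 1 → (∀ y : Q, α y = ψ' y * x') →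
        ψ' = ψ ∧ x' = x) := by
  obtain ⟨f, g, hα⟩ := hBS
  have hψα : (Rt h x)⁻¹ * α = ψ := Equiv.ext fun y => by
    rw [Equiv.Perm.mul_apply, Equiv.Perm.inv_eq_iff_eq, hdec, IsLoop.Rt_apply]
  have hα1 : α 1 = x := by rw [hdec, hψ, h.one_mul]
  have hpseudo := (h.autotopism_of_bryantSchneider hB hα x).isPseudoAutomorphism h (hψα ▸ hψ)
  rw [hψα] at hpseudo
  -- `x * rinv h (linv h t) = x * t`, so this witness makes the companion `(x / σ g) * σ x`.
  refine ⟨⟨linv h ((Lt h x).symm ((Rt h (σ g)).symm x)), fun a b => ?_⟩, fun ψ' x' hψ' hdec' =>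
    h.eq_of_mul_eq_mul hψ hψ' fun y => (hdec' y).symm.trans (hdec y)⟩
  have hc : (x * rinv h (linv h ((Lt h x).symm ((Rt h (σ g)).symm x)))) * σ x
      = (Rt h (σ x) * (Rt h (σ g))⁻¹ * α) 1 := by
    rw [h.rinv_linv, ← IsLoop.Lt_apply h x, Equiv.apply_symm_apply]
    simp only [Equiv.Perm.mul_apply, Equiv.Perm.inv_def, hα1, IsLoop.Rt_apply]
  simpa only [hc, Equiv.Perm.mul_apply, IsLoop.Rt_apply] using hpseudo a b
end
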